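/- arXiv:math/0302236 — 3 statements merged into one kernel-verified Lean document; each statement's English description precedes it below -/
import Mathlib

section
/- Let σ be a polyhedral cone in V and ρ a free edge of σ, i.e. all other edges of σ lie in one facet τ, so that σ = τ + ρ. If a fan is simplicial then it contains no deficient cones, and conversely: a fan Φ is simplicial if and only if every cone of Φ of dimension ≥ 2 has a free edge (equivalently, Φ contains no deficient cones). -/
open Set

variable {V : Type} [AddCommGroup V] [Module ℝ V]

/-- A polyhedral cone: a finite intersection of closed halfspaces `{L ≥ 0}`. -/
def IsPolyCone (σ : Set V) : Prop :=
  ∃ S : Finset (V →ₗ[ℝ] ℝ), σ = {v | ∀ L ∈ S, 0 ≤ L v}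

/-- `τ` is a face of the cone `σ`. -/
def IsFaceOf (τ σ : Set V) : Prop :=
  ∃ L : V →ₗ[ℝ] ℝ, (∀ v ∈ σ, 0 ≤ L v) ∧ τ = {v ∈ σ | L v = 0}

/-- The dimension of a cone: the dimension of its linear span. -/
noncomputable def coneDim (σ : Set V) : ℕ :=
  Module.finrank ℝ (Submodule.span ℝ σ)

/-- A fan: a finite collection of polyhedral cones, closed under taking faces, such
that the intersection of two cones is a face of each, containing the zero cone. -/
structure Fan (V : Type) [AddCommGroup V] [Module ℝ V] where
  cones : Finset (Set V)
  poly : ∀ σ ∈ cones, IsPolyCone σ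
  face_mem : ∀ σ ∈ cones, ∀ τ : Set V, IsFaceOf τ σ → τ ∈ cones
  inter_face : ∀ σ ∈ cones, ∀ τ ∈ cones, IsFaceOf (σ ∩ τ) σ
  zero_mem : ({0} : Set V) ∈ cones

/-- The support of a fan. -/
def Fan.support (Φ : Fan V) : Set V := ⋃ σ ∈ Φ.cones, σ

/-- A fan is complete if its support is all of `V`. -/
def Fan.IsComplete (Φ : Fan V) : Prop := Φ.support = univ

/-- A cone is simplicial if it is the convex hull of `coneDim σ` many rays spanned
by linearly independent vectors. -/
def IsSimplicialCone (σ : Set V) : Prop :=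
  ∃ f : Fin (coneDim σ) → V, LinearIndependent ℝ f ∧
    σ = {v | ∃ c : Fin (coneDim σ) → ℝ, (∀ i, 0 ≤ c i) ∧ v = ∑ i, c i • f i}

def Fan.IsSimplicial (Φ : Fan V) : Prop := ∀ σ ∈ Φ.cones, IsSimplicialCone σ

/-- An edge of a cone: a 1-dimensional face. -/
def IsEdge (ρ σ : Set V) : Prop := IsFaceOf ρ σ ∧ coneDim ρ = 1

/-- Minkowski sum of two subsets. -/
def setAdd (σ τ : Set V) : Set V := {x | ∃ a ∈ σ, ∃ b ∈ τ, x = a + b}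

/-- An edge `ρ` of `σ` is free if all other edges of `σ` are contained in one facet
`τ`, and `σ = τ + ρ`. -/
def IsFreeEdge (ρ σ : Set V) : Prop :=
  IsEdge ρ σ ∧ ∃ τ : Set V, IsFaceOf τ σ ∧ coneDim τ = coneDim σ - 1 ∧
    (∀ ρ' : Set V, IsEdge ρ' σ → ρ' ≠ ρ → ρ' ⊆ τ) ∧ σ = setAdd τ ρ

/-- A cone is deficient if it has no free edge. -/
def IsDeficient (σ : Set V) : Prop := ¬ ∃ ρ : Set V, IsFreeEdge ρ σ

/-- The singular subfan `Φˢ`: the (cones of the) minimal subfan of `Φ` containing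
all deficient cones of `Φ`. -/
def Fan.singular (Φ : Fan V) : Set (Set V) :=
  {σ | σ ∈ Φ.cones ∧ ∃ τ ∈ Φ.cones, IsDeficient τ ∧ IsFaceOf σ τ}

/-- The star of a cone `σ` in the fan `Φ`. -/
def Fan.star (Φ : Fan V) (σ : Set V) : Set (Set V) := {τ | τ ∈ Φ.cones ∧ σ ⊆ τ}

/-- `[St(σ)]`: the minimal subfan containing the star of `σ`. -/
def Fan.closedStar (Φ : Fan V) (σ : Set V) : Set (Set V) :=
  {ξ | ∃ τ ∈ Φ.star σ, IsFaceOf ξ τ}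

/-- `∂St(σ)`. -/
def Fan.boundaryStar (Φ : Fan V) (σ : Set V) : Set (Set V) :=
  Φ.closedStar σ \ Φ.star σ

/-- The link of a cone. -/
def Fan.link (Φ : Fan V) (σ : Set V) : Set (Set V) :=
  {τ | τ ∈ Φ.boundaryStar σ ∧ τ ∩ σ = {0}}

/-- The relative interior `σ⁰` of a cone: the complement of its proper faces. -/
def coneInt (σ : Set V) : Set V :=
  σ \ ⋃ τ ∈ {τ : Set V | IsFaceOf τ σ ∧ τ ≠ σ}, τ

/-- `l` is piecewise linear with respect to `Φ`. -/
def IsPWLinear (Φ : Fan V) (l : V → ℝ) : Prop :=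
  ∀ σ ∈ Φ.cones, ∃ L : V →ₗ[ℝ] ℝ, ∀ v ∈ σ, l v = L v

/-- `l` is strictly convex on the complete fan `Φ`: for any two distinct
top-dimensional cones `σ, τ` the linear function agreeing with `l` on `σ` is
strictly smaller than `l` on the interior of `τ`. -/
def IsStrictlyConvex (Φ : Fan V) (l : V → ℝ) : Prop :=
  IsPWLinear Φ l ∧
  ∀ σ ∈ Φ.cones, coneDim σ = Module.finrank ℝ V →
    ∀ L : V →ₗ[ℝ] ℝ, (∀ v ∈ σ, l v = L v) →
      ∀ τ ∈ Φ.cones, coneDim τ = Module.finrank ℝ V → τ ≠ σ →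
        ∀ v ∈ coneInt τ, L v < l v


def coneOf {n : ℕ} (f : Fin n → V) : Set V :=
  {v | ∃ c : Fin n → ℝ, (∀ i, 0 ≤ c i) ∧ v = ∑ i, c i • f i}

def ray (w : V) : Set V := {v | ∃ t : ℝ, 0 ≤ t ∧ v = t • w}

lemma smul_mem_coneOf {n : ℕ} (f : Fin n → V) (i : Fin n) {t : ℝ} (ht : 0 ≤ t) :
    t • f i ∈ coneOf f := by
  refine ⟨fun j => if j = i then t else 0, fun j => ?_, ?_⟩
  · dsimp only; split <;> simp [ht]
  · simp [ite_smul, Finset.sum_ite_eq']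

lemma mem_coneOf {n : ℕ} (f : Fin n → V) (i : Fin n) : f i ∈ coneOf f := by
  simpa using smul_mem_coneOf f i zero_le_one

lemma map_coneOf {n : ℕ} (L : V →ₗ[ℝ] ℝ) (c : Fin n → ℝ) (f : Fin n → V) :
    L (∑ i, c i • f i) = ∑ i, c i * L (f i) := by
  simp [map_sum, map_smul, smul_eq_mul]

lemma span_coneOf {n : ℕ} (f : Fin n → V) :
    Submodule.span ℝ (coneOf f) = Submodule.span ℝ (Set.range f) := by
  apply le_antisymm
  · rw [Submodule.span_le]
    rintro v ⟨c, -, rfl⟩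
    exact Submodule.sum_mem _ fun i _ =>
      Submodule.smul_mem _ _ (Submodule.subset_span ⟨i, rfl⟩)
  · exact Submodule.span_mono (fun v ⟨i, hi⟩ => hi ▸ mem_coneOf f i)

lemma coneDim_coneOf {n : ℕ} {f : Fin n → V} (hf : LinearIndependent ℝ f) :
    coneDim (coneOf f) = n := by
  rw [coneDim, span_coneOf, finrank_span_eq_card hf, Fintype.card_fin]

lemma span_ray (w : V) : Submodule.span ℝ (ray w) = Submodule.span ℝ {w} := by
  apply le_antisymm
  · rw [Submodule.span_le]
    rintro v ⟨t, -, rfl⟩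
    exact Submodule.smul_mem _ _ (Submodule.subset_span rfl)
  · refine Submodule.span_mono (fun v hv => ?_)
    rw [Set.mem_singleton_iff] at hv
    exact ⟨1, zero_le_one, by rw [hv, one_smul]⟩

lemma coneDim_ray {w : V} (hw : w ≠ 0) : coneDim (ray w) = 1 := by
  rw [coneDim, span_ray, finrank_span_singleton hw]

lemma exists_ne_zero_of_coneDim_ne_zero {σ : Set V} (h : coneDim σ ≠ 0) :
    ∃ v ∈ σ, v ≠ 0 := by
  by_contra hc
  push_neg at hc
  apply h
  have hspan : Submodule.span ℝ σ = ⊥ := by rw [Submodule.span_eq_bot]; exact hc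
  rw [coneDim, hspan]
  exact finrank_bot ℝ V

lemma exists_dual {n : ℕ} [FiniteDimensional ℝ V] {f : Fin n → V}
    (hf : LinearIndependent ℝ f) (g : Fin n → ℝ) :
    ∃ L : V →ₗ[ℝ] ℝ, ∀ i, L (f i) = g i := by
  obtain ⟨q, hq⟩ := Submodule.exists_isCompl (Submodule.span ℝ (Set.range f))
  let π := Submodule.projectionOnto _ q hq
  let b : Module.Basis (Fin n) ℝ (Submodule.span ℝ (Set.range f)) := Module.Basis.span hf
  refine ⟨(b.constr ℝ g).comp π, fun i => ?_⟩
  have hmem : f i ∈ Submodule.span ℝ (Set.range f) := Submodule.subset_span ⟨i, rfl⟩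
  have h1 : π (f i) = b i := by
    apply Subtype.ext
    have := Submodule.projectionOnto_apply_left hq ⟨f i, hmem⟩
    rw [show π (f i) = π ((⟨f i, hmem⟩ : Submodule.span ℝ (Set.range f)) : V) from rfl, this]
    simp [b, Module.Basis.span_apply]
  simp [LinearMap.comp_apply, h1, b, Module.Basis.constr_basis, Finsupp.single_apply]

example (σ : Set V) : coneDim σ = Module.finrank ℝ (Submodule.span ℝ σ) := rfl
lemma coneOf_cast {a b : ℕ} (h : a = b) (f : Fin b → V) :
    coneOf (f ∘ Fin.cast h) = coneOf f := by subst h; rfl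

lemma zero_mem_of_poly {σ : Set V} (h : IsPolyCone σ) : (0 : V) ∈ σ := by
  obtain ⟨S, rfl⟩ := h
  intro L _
  simp

lemma smul_mem_of_poly {σ : Set V} (h : IsPolyCone σ) {v : V} (hv : v ∈ σ)
    {t : ℝ} (ht : 0 ≤ t) : t • v ∈ σ := by
  obtain ⟨S, rfl⟩ := h
  intro L hL
  rw [map_smul, smul_eq_mul]
  exact mul_nonneg ht (hv L hL)

/-- A pointed polyhedral cone of dimension 1 is a ray. -/
lemma ray_of_dim_one [FiniteDimensional ℝ V] {σ : Set V} (hpoly : IsPolyCone σ)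
    (hpt : IsFaceOf {0} σ) (hd : coneDim σ = 1) :
    ∃ w : V, w ≠ 0 ∧ σ = ray w := by
  obtain ⟨w, hwσ, hw0⟩ := exists_ne_zero_of_coneDim_ne_zero (by omega : coneDim σ ≠ 0)
  obtain ⟨L, hL0, hLeq⟩ := hpt
  have hLw : 0 < L w := by
    rcases lt_or_eq_of_le (hL0 w hwσ) with h | h
    · exact h
    · exact absurd (show w ∈ ({0} : Set V) by rw [hLeq]; exact ⟨hwσ, h.symm⟩) hw0
  have hspan : Submodule.span ℝ σ = Submodule.span ℝ {w} := by
    refine (Submodule.eq_of_le_of_finrank_le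
      (Submodule.span_mono (Set.singleton_subset_iff.mpr hwσ)) ?_).symm
    rw [show Module.finrank ℝ (Submodule.span ℝ σ) = 1 from hd, finrank_span_singleton hw0]
  refine ⟨w, hw0, Set.Subset.antisymm ?_ ?_⟩
  · intro v hv
    have : v ∈ Submodule.span ℝ {w} := hspan ▸ Submodule.subset_span hv
    obtain ⟨t, rfl⟩ := Submodule.mem_span_singleton.mp this
    refine ⟨t, ?_, rfl⟩
    have : 0 ≤ t * L w := by
      have := hL0 _ hv
      rwa [map_smul, smul_eq_mul] at this
    exact nonneg_of_mul_nonneg_right (by linarith [this] : 0 ≤ L w * t) hLw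
  · rintro v ⟨t, ht, rfl⟩
    exact smul_mem_of_poly hpoly hwσ ht

/-- Every edge of a simplicial cone is one of the generating rays. -/
lemma edge_eq_ray [FiniteDimensional ℝ V] {n : ℕ} {f : Fin n → V}
    (hf : LinearIndependent ℝ f) {ρ : Set V} (h : IsEdge ρ (coneOf f)) :
    ∃ i, ρ = ray (f i) := by
  obtain ⟨⟨M, hM0, hMeq⟩, hd⟩ := h
  have hMf : ∀ i, 0 ≤ M (f i) := fun i => hM0 _ (mem_coneOf f i)
  obtain ⟨v, hvρ, hv0⟩ := exists_ne_zero_of_coneDim_ne_zero (by omega : coneDim ρ ≠ 0)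
  have hvρ' := hvρ
  rw [hMeq] at hvρ'
  obtain ⟨⟨c, hc, rfl⟩, hMv⟩ := hvρ'
  rw [map_coneOf] at hMv
  have hterms : ∀ i ∈ Finset.univ, c i * M (f i) = 0 := by
    rw [← Finset.sum_eq_zero_iff_of_nonneg (fun i _ => mul_nonneg (hc i) (hMf i))]
    exact hMv
  obtain ⟨j, hj⟩ : ∃ j, c j ≠ 0 := by
    by_contra hcon
    push_neg at hcon
    exact hv0 (by simp [hcon])
  have hMfj : M (f j) = 0 := by
    have := hterms j (Finset.mem_univ j)
    exact (mul_eq_zero.mp this).resolve_left hj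
  have hfjρ : f j ∈ ρ := by rw [hMeq]; exact ⟨mem_coneOf f j, hMfj⟩
  have hspanρ : Submodule.span ℝ ρ = Submodule.span ℝ {f j} := by
    refine (Submodule.eq_of_le_of_finrank_le
      (Submodule.span_mono (Set.singleton_subset_iff.mpr hfjρ)) ?_).symm
    rw [show Module.finrank ℝ (Submodule.span ℝ ρ) = 1 from hd,
      finrank_span_singleton (hf.ne_zero j)]
  have hMfk : ∀ k, k ≠ j → M (f k) ≠ 0 := by
    intro k hkj hMk
    have hfkρ : f k ∈ ρ := by rw [hMeq]; exact ⟨mem_coneOf f k, hMk⟩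
    have : f k ∈ Submodule.span ℝ (f '' {j}) := by
      rw [Set.image_singleton]
      exact hspanρ ▸ Submodule.subset_span hfkρ
    exact hf.notMem_span_image (by simpa using hkj) this
  refine ⟨j, Set.Subset.antisymm ?_ ?_⟩
  · intro u huρ
    rw [hMeq] at huρ
    obtain ⟨⟨d, hd0, rfl⟩, hMu⟩ := huρ
    rw [map_coneOf] at hMu
    have hterms' : ∀ i ∈ Finset.univ, d i * M (f i) = 0 := by
      rw [← Finset.sum_eq_zero_iff_of_nonneg (fun i _ => mul_nonneg (hd0 i) (hMf i))]
      exact hMu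
    have hdz : ∀ i, i ≠ j → d i = 0 := fun i hij =>
      (mul_eq_zero.mp (hterms' i (Finset.mem_univ i))).resolve_right (hMfk i hij)
    refine ⟨d j, hd0 j, ?_⟩
    rw [Finset.sum_eq_single j (fun i _ hij => by rw [hdz i hij, zero_smul]) (by simp)]
  · rintro u ⟨t, ht, rfl⟩
    rw [hMeq]
    refine ⟨smul_mem_coneOf f j ht, ?_⟩
    rw [map_smul, smul_eq_mul, hMfj, mul_zero]
lemma setAdd_coneOf_ray {m : ℕ} (f : Fin m → V) (w : V) :
    setAdd (coneOf f) (ray w) = coneOf (Fin.snoc f w) := by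
  ext x
  constructor
  · rintro ⟨a, ⟨c, hc, rfl⟩, b, ⟨t, ht, rfl⟩, rfl⟩
    refine ⟨Fin.snoc c t, fun i => ?_, ?_⟩
    · induction i using Fin.lastCases <;> simp [ht, hc]
    · rw [Fin.sum_univ_castSucc]
      simp [Fin.snoc_castSucc, Fin.snoc_last]
  · rintro ⟨c, hc, rfl⟩
    refine ⟨∑ i : Fin m, c i.castSucc • f i, ⟨fun i => c i.castSucc, fun i => hc _, rfl⟩,
      c (Fin.last m) • w, ⟨c (Fin.last m), hc _, rfl⟩, ?_⟩
    rw [Fin.sum_univ_castSucc]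
    simp [Fin.snoc_castSucc, Fin.snoc_last]

lemma coneOf_free_edge [FiniteDimensional ℝ V] {m : ℕ} (hm : 1 ≤ m)
    {f : Fin (m + 1) → V} (hf : LinearIndependent ℝ f) :
    ∃ ρ : Set V, IsFreeEdge ρ (coneOf f) := by
  set σ := coneOf f with hσ
  have hflast : f (Fin.last m) ≠ 0 := hf.ne_zero _
  set g : Fin m → V := f ∘ Fin.castSucc with hg
  have hgli : LinearIndependent ℝ g := hf.comp _ (Fin.castSucc_injective m)
  -- the functional cutting out the last ray
  obtain ⟨L₁, hL₁⟩ := exists_dual hf (fun i => if i = Fin.last m then 0 else 1)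
  -- the functional cutting out the opposite facet
  obtain ⟨L₂, hL₂⟩ := exists_dual hf (fun i => if i = Fin.last m then 1 else 0)
  have hface₁ : IsFaceOf (ray (f (Fin.last m))) σ := by
    refine ⟨L₁, ?_, ?_⟩
    · rintro v ⟨c, hc, rfl⟩
      rw [map_coneOf]
      refine Finset.sum_nonneg fun i _ => mul_nonneg (hc i) ?_
      rw [hL₁]; split <;> norm_num
    · apply Set.Subset.antisymm
      · rintro v ⟨t, ht, rfl⟩
        refine ⟨smul_mem_coneOf f _ ht, ?_⟩
        rw [map_smul, smul_eq_mul, hL₁]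
        simp
      · rintro v ⟨⟨c, hc, rfl⟩, hLv⟩
        rw [map_coneOf] at hLv
        have hterms : ∀ i ∈ Finset.univ, c i * L₁ (f i) = 0 := by
          rw [← Finset.sum_eq_zero_iff_of_nonneg]
          · exact hLv
          · intro i _
            refine mul_nonneg (hc i) ?_
            rw [hL₁]; split <;> norm_num
        have hcz : ∀ i, i ≠ Fin.last m → c i = 0 := by
          intro i hi
          have := hterms i (Finset.mem_univ i)
          rw [hL₁, if_neg hi, mul_one] at this
          exact this
        refine ⟨c (Fin.last m), hc _, ?_⟩
        rw [Finset.sum_eq_single (Fin.last m) (fun i _ hi => by rw [hcz i hi, zero_smul])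
          (by simp)]
  have hedge : IsEdge (ray (f (Fin.last m))) σ := ⟨hface₁, coneDim_ray hflast⟩
  have hface₂ : IsFaceOf (coneOf g) σ := by
    refine ⟨L₂, ?_, ?_⟩
    · rintro v ⟨c, hc, rfl⟩
      rw [map_coneOf]
      refine Finset.sum_nonneg fun i _ => mul_nonneg (hc i) ?_
      rw [hL₂]; split <;> norm_num
    · apply Set.Subset.antisymm
      · rintro v ⟨c, hc, rfl⟩
        constructor
        · refine ⟨Fin.snoc c 0, fun i => ?_, ?_⟩
          · induction i using Fin.lastCases <;> simp [hc]
          · rw [Fin.sum_univ_castSucc]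
            simp [Fin.snoc_castSucc, Fin.snoc_last, hg]
        · rw [map_coneOf]
          apply Finset.sum_eq_zero
          intro i _
          rw [hg, Function.comp_apply, hL₂, if_neg (Fin.castSucc_lt_last i).ne, mul_zero]
      · rintro v ⟨⟨c, hc, rfl⟩, hLv⟩
        rw [map_coneOf] at hLv
        have hterms : ∀ i ∈ Finset.univ, c i * L₂ (f i) = 0 := by
          rw [← Finset.sum_eq_zero_iff_of_nonneg]
          · exact hLv
          · intro i _
            refine mul_nonneg (hc i) ?_
            rw [hL₂]; split <;> norm_num
        have hclast : c (Fin.last m) = 0 := by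
          have := hterms (Fin.last m) (Finset.mem_univ _)
          rw [hL₂, if_pos rfl, mul_one] at this
          exact this
        refine ⟨fun i => c i.castSucc, fun i => hc _, ?_⟩
        rw [Fin.sum_univ_castSucc, hclast, zero_smul, add_zero]
        rfl
  refine ⟨ray (f (Fin.last m)), hedge, coneOf g, hface₂, ?_, ?_, ?_⟩
  · rw [coneDim_coneOf hgli, coneDim_coneOf hf]
    omega
  · intro ρ' hρ' hne
    obtain ⟨i, rfl⟩ := edge_eq_ray hf hρ'
    have hi : i ≠ Fin.last m := by
      rintro rfl
      exact hne rfl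
    obtain ⟨j, rfl⟩ := Fin.exists_castSucc_eq.mpr hi
    rintro v ⟨t, ht, rfl⟩
    exact smul_mem_coneOf g j ht
  · rw [setAdd_coneOf_ray]
    exact (Fin.snoc_init_self f).symm ▸ rfl
lemma isSimplicialCone_of_coneOf {n : ℕ} {f : Fin n → V} (hf : LinearIndependent ℝ f)
    {σ : Set V} (hσ : σ = coneOf f) : IsSimplicialCone σ := by
  have hd : coneDim σ = n := by rw [hσ, coneDim_coneOf hf]
  refine ⟨f ∘ Fin.cast hd, hf.comp _ (Fin.cast_injective hd), ?_⟩
  show σ = coneOf (f ∘ Fin.cast hd)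
  rw [coneOf_cast]
  exact hσ

lemma span_setAdd {τ ρ : Set V} (hτ : (0 : V) ∈ τ) (hρ : (0 : V) ∈ ρ) :
    Submodule.span ℝ (setAdd τ ρ) = Submodule.span ℝ τ ⊔ Submodule.span ℝ ρ := by
  apply le_antisymm
  · rw [Submodule.span_le]
    rintro x ⟨a, ha, b, hb, rfl⟩
    exact Submodule.mem_sup.mpr ⟨a, Submodule.subset_span ha, b, Submodule.subset_span hb, rfl⟩
  · refine sup_le (Submodule.span_le.mpr fun a ha => Submodule.subset_span ?_)
      (Submodule.span_le.mpr fun b hb => Submodule.subset_span ?_)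
    · exact ⟨a, ha, 0, hρ, (add_zero a).symm⟩
    · exact ⟨0, hτ, b, hb, (zero_add b).symm⟩

lemma zero_mem_of_face {σ τ : Set V} (hσ : (0 : V) ∈ σ) (h : IsFaceOf τ σ) :
    (0 : V) ∈ τ := by
  obtain ⟨L, -, rfl⟩ := h
  exact ⟨hσ, map_zero L⟩

lemma pointed_of_mem (Φ : Fan V) {σ : Set V} (hσ : σ ∈ Φ.cones) :
    IsFaceOf {0} σ := by
  have h := Φ.inter_face σ hσ {0} Φ.zero_mem
  rwa [Set.inter_eq_self_of_subset_right
    (Set.singleton_subset_iff.mpr (zero_mem_of_poly (Φ.poly σ hσ)))] at h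

lemma simplicial_of_free [FiniteDimensional ℝ V] (Φ : Fan V)
    (hfree : ∀ σ ∈ Φ.cones, 2 ≤ coneDim σ → ∃ ρ : Set V, IsFreeEdge ρ σ) :
    ∀ n : ℕ, ∀ σ ∈ Φ.cones, coneDim σ ≤ n → IsSimplicialCone σ := by
  intro n
  induction n with
  | zero =>
    intro σ hσ hdim
    have hd0 : coneDim σ = 0 := Nat.le_zero.mp hdim
    have hspan : Submodule.span ℝ σ = ⊥ := Submodule.finrank_eq_zero.mp hd0
    refine isSimplicialCone_of_coneOf (f := Fin.elim0)
      linearIndependent_empty_type (Set.Subset.antisymm ?_ ?_)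
    · intro v hv
      have hv0 : v = 0 := by
        have : v ∈ (⊥ : Submodule ℝ V) := hspan ▸ Submodule.subset_span hv
        simpa using this
      exact ⟨Fin.elim0, fun i => i.elim0, by simp [hv0]⟩
    · rintro v ⟨c, -, rfl⟩
      simpa using zero_mem_of_poly (Φ.poly σ hσ)
  | succ n ih =>
    intro σ hσ hdim
    rcases Nat.lt_or_ge (coneDim σ) (n + 1) with h | h
    · exact ih σ hσ (Nat.lt_succ_iff.mp h)
    have hd : coneDim σ = n + 1 := le_antisymm hdim h
    rcases Nat.eq_zero_or_pos n with rfl | hn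
    · -- dimension 1 : σ is a ray
      obtain ⟨w, hw0, hray⟩ := ray_of_dim_one (Φ.poly σ hσ) (pointed_of_mem Φ hσ) hd
      refine isSimplicialCone_of_coneOf (f := fun _ : Fin 1 => w)
        (linearIndependent_unique_iff.mpr hw0) ?_
      rw [hray]
      ext v
      constructor
      · rintro ⟨t, ht, rfl⟩
        exact ⟨fun _ => t, fun _ => ht, by simp⟩
      · rintro ⟨c, hc, rfl⟩
        exact ⟨c 0, hc 0, by simp⟩
    · -- dimension ≥ 2 : use the free edge
      obtain ⟨ρ, hρedge, τ, hτface, hτdim, -, hσadd⟩ := hfree σ hσ (by omega)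
      have hτmem : τ ∈ Φ.cones := Φ.face_mem σ hσ τ hτface
      have hρmem : ρ ∈ Φ.cones := Φ.face_mem σ hσ ρ hρedge.1
      have hτdim' : coneDim τ = n := by rw [hτdim, hd]; omega
      obtain ⟨f₀, hf₀li, hτeq⟩ := ih τ hτmem (le_of_eq hτdim')
      have hτeq' : τ = coneOf f₀ := hτeq
      set f : Fin n → V := f₀ ∘ Fin.cast hτdim'.symm with hfdef
      have hfli : LinearIndependent ℝ f := hf₀li.comp _ (Fin.cast_injective _)
      have hτf : τ = coneOf f := by rw [hfdef, coneOf_cast]; exact hτeq'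
      obtain ⟨w, hw0, hρray⟩ :=
        ray_of_dim_one (Φ.poly ρ hρmem) (pointed_of_mem Φ hρmem) hρedge.2
      have h0σ : (0 : V) ∈ σ := zero_mem_of_poly (Φ.poly σ hσ)
      have hwspan : w ∉ Submodule.span ℝ (Set.range f) := by
        intro hw
        have h1 : Submodule.span ℝ σ = Submodule.span ℝ τ := by
          rw [hσadd, span_setAdd (zero_mem_of_face h0σ hτface)
            (zero_mem_of_face h0σ hρedge.1), hρray, span_ray, hτf, span_coneOf,
            sup_eq_left.mpr (Submodule.span_le.mpr (Set.singleton_subset_iff.mpr hw))]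
        have h2 : coneDim σ = coneDim τ := by unfold coneDim; rw [h1]
        omega
      have hli2 : LinearIndependent ℝ (Fin.snoc f w : Fin (n + 1) → V) :=
        linearIndependent_fin_snoc.mpr ⟨hfli, hwspan⟩
      apply isSimplicialCone_of_coneOf hli2
      rw [hσadd, hτf, hρray, setAdd_coneOf_ray]
/-- A fan is simplicial if and only if every cone of dimension
`≥ 2` has a free edge (equivalently, the fan contains no deficient cones). In
particular a simplicial fan contains no deficient cones of dimension `≥ 2`. -/
theorem simplicial_iff_no_deficient [FiniteDimensional ℝ V] (Φ : Fan V) :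
    Φ.IsSimplicial ↔
      ∀ σ ∈ Φ.cones, 2 ≤ coneDim σ → ∃ ρ : Set V, IsFreeEdge ρ σ := by
  constructor
  · intro hs σ hσ h2
    obtain ⟨f, hf, hσeq⟩ := hs σ hσ
    have hσeq' : σ = coneOf f := hσeq
    obtain ⟨m, hm⟩ : ∃ m, coneDim σ = m + 1 := ⟨coneDim σ - 1, by omega⟩
    have h1m : 1 ≤ m := by omega
    have hcast : σ = coneOf (f ∘ Fin.cast hm.symm) := by
      rw [coneOf_cast]; exact hσeq'
    rw [hcast]
    exact coneOf_free_edge h1m (hf.comp _ (Fin.cast_injective _))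
  · intro hfree σ hσ
    exact simplicial_of_free Φ hfree (coneDim σ) σ hσ le_rfl
end

section
/- Let P be a simple n-dimensional polytope and A(P) = Diff/I, where Diff is the algebra of constant-coefficient differential operators on 𝒫(P) and I = {d ∈ Diff : d·Vol = 0}. Then the pairing (α, β)_T = (αβ)(Vol) is a nondegenerate pairing A_k(P) × A_{n−k}(P) → ℝ; in particular dim A_k(P) = dim A_{n−k}(P). -/
open MeasureTheory

/-- The polytope with outward facet normals `ξ i` and support numbers `h i`. -/
def polyOf {n m : ℕ} (ξ : Fin m → EuclideanSpace ℝ (Fin n)) (h : Fin m → ℝ) :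
    Set (EuclideanSpace ℝ (Fin n)) :=
  {y | ∀ i, (inner ℝ (ξ i) y : ℝ) ≤ h i}

/-- The set of indices of facets of `polyOf ξ h` active at a point `y`. -/
def activeSet {n m : ℕ} (ξ : Fin m → EuclideanSpace ℝ (Fin n)) (h : Fin m → ℝ)
    (y : EuclideanSpace ℝ (Fin n)) : Set (Fin m) :=
  {i | (inner ℝ (ξ i) y : ℝ) = h i}

/-- `P = polyOf ξ h₀` is a simple `n`-polytope with exactly the `m` facets
`P_i = {y ∈ P : ⟨ξᵢ,y⟩ = h₀ i}`: it is compact with nonempty interior, every point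
of `P` lies on at most `n` facets, and each facet has a point lying on it alone. -/
def IsSimplePolytopeData {n m : ℕ} (ξ : Fin m → EuclideanSpace ℝ (Fin n))
    (h₀ : Fin m → ℝ) : Prop :=
  IsCompact (polyOf ξ h₀) ∧ (interior (polyOf ξ h₀)).Nonempty ∧
    (∀ y ∈ polyOf ξ h₀, (activeSet ξ h₀ y).ncard ≤ n) ∧
    (∀ i : Fin m, ∃ y ∈ polyOf ξ h₀, activeSet ξ h₀ y = {i})

/-- The full contraction `⟨D, F⟩ = (D(F))(0) = Σ_d d!·D_d·F_d` of the
constant-coefficient differential operator `D = D(∂/∂H₁,...,∂/∂H_m)` against the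
polynomial `F`:  the constant term of the result of applying `D` to `F`. -/
noncomputable def contract {m : ℕ} (D F : MvPolynomial (Fin m) ℝ) : ℝ :=
  ∑ d ∈ F.support, (∏ i, (Nat.factorial (d i) : ℝ)) * D.coeff d * F.coeff d

/-- The ideal `I = {D ∈ Diff : D·Vol = 0}` of differential operators annihilating
`Vol` (`D(Vol) = 0` iff all further derivatives of `D(Vol)` vanish at the origin,
i.e. `⟨E·D, Vol⟩ = 0` for all `E`). -/
noncomputable def annIdeal {m : ℕ} (Vol : MvPolynomial (Fin m) ℝ) :
    Ideal (MvPolynomial (Fin m) ℝ) where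
  carrier := {D | ∀ E, contract (E * D) Vol = 0}
  zero_mem' := by intro E; simp [contract]
  add_mem' := by
    intro a b ha hb E
    have h : contract (E * (a + b)) Vol
        = contract (E * a) Vol + contract (E * b) Vol := by
      simp only [mul_add, contract, MvPolynomial.coeff_add, ← Finset.sum_add_distrib]
      exact Finset.sum_congr rfl fun d _ => by ring
    rw [h, ha E, hb E, add_zero]
  smul_mem' := by
    intro c D hD E
    have h : E * (c • D) = (E * c) * D := by rw [smul_eq_mul]; ring
    rw [h]; exact hD (E * c)

/-- The degree-`k` graded piece `A_k(P)` of Timorin's polytope algebra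
`A(P) = Diff / Ann(Vol)`. -/
noncomputable def APpiece {m : ℕ} (Vol : MvPolynomial (Fin m) ℝ) (k : ℕ) :
    Submodule ℝ (MvPolynomial (Fin m) ℝ ⧸ annIdeal Vol) :=
  Submodule.map (Ideal.Quotient.mkₐ ℝ (annIdeal Vol)).toLinearMap
    (MvPolynomial.homogeneousSubmodule (Fin m) ℝ k)

namespace TimorinAux

open MvPolynomial Module LinearMap

variable {m : ℕ}

lemma contract_add_left (A B F : MvPolynomial (Fin m) ℝ) :
    contract (A + B) F = contract A F + contract B F := by
  simp only [contract, MvPolynomial.coeff_add, ← Finset.sum_add_distrib]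
  exact Finset.sum_congr rfl fun d _ => by ring

lemma contract_smul_left (c : ℝ) (A F : MvPolynomial (Fin m) ℝ) :
    contract (c • A) F = c * contract A F := by
  simp only [contract, MvPolynomial.coeff_smul, smul_eq_mul, Finset.mul_sum]
  exact Finset.sum_congr rfl fun d _ => by ring

lemma contract_homogComp {n k : ℕ} (hk : k ≤ n) (Vol D E : MvPolynomial (Fin m) ℝ)
    (hV : Vol.IsHomogeneous n) (hD : D.IsHomogeneous k) :
    contract (E * D) Vol
      = contract ((homogeneousComponent (n - k) E) * D) Vol := by
  unfold contract
  refine Finset.sum_congr rfl fun d hd => ?_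
  have hdeg : d.degree = n := by
    rw [Finsupp.degree_eq_weight_one]
    exact hV (MvPolynomial.mem_support_iff.mp hd)
  congr 1
  congr 1
  rw [MvPolynomial.coeff_mul, MvPolynomial.coeff_mul]
  refine Finset.sum_congr rfl fun p hp => ?_
  by_cases hD2 : D.coeff p.2 = 0
  · rw [hD2, mul_zero, mul_zero]
  · have hpd : p.1 + p.2 = d := Finset.HasAntidiagonal.mem_antidiagonal.mp hp
    have h2 : p.2.degree = k := by
      rw [Finsupp.degree_eq_weight_one]; exact hD hD2
    have hsum : p.1.degree + p.2.degree = n := by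
      simp only [Finsupp.degree_eq_weight_one]
      rw [← map_add, hpd, ← Finsupp.degree_eq_weight_one, hdeg]
    have h1 : p.1.degree = n - k := by omega
    rw [MvPolynomial.coeff_homogeneousComponent, if_pos h1]

lemma mem_ann_iff {n k l : ℕ} (hk : k ≤ n) (hl : l = n - k)
    (Vol : MvPolynomial (Fin m) ℝ) (hV : Vol.IsHomogeneous n)
    (D : MvPolynomial (Fin m) ℝ) (hD : D.IsHomogeneous k) :
    D ∈ annIdeal Vol ↔
      ∀ B ∈ homogeneousSubmodule (Fin m) ℝ l, contract (B * D) Vol = 0 := by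
  subst hl
  constructor
  · intro h B _; exact h B
  · intro h E
    rw [contract_homogComp hk Vol D E hV hD]
    exact h _ (homogeneousComponent_mem _ _)

instance instFD (k : ℕ) : FiniteDimensional ℝ (homogeneousSubmodule (Fin m) ℝ k) :=
  Submodule.finiteDimensional_of_le (S₂ := restrictTotalDegree (Fin m) ℝ k)
    (fun p hp => (MvPolynomial.mem_restrictTotalDegree _ _ _).mpr
      (MvPolynomial.IsHomogeneous.totalDegree_le hp))

/-- contraction against `Vol` as a linear map. -/
noncomputable def contractL (Vol : MvPolynomial (Fin m) ℝ) :
    MvPolynomial (Fin m) ℝ →ₗ[ℝ] ℝ where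
  toFun D := contract D Vol
  map_add' A B := contract_add_left A B Vol
  map_smul' c A := contract_smul_left c A Vol

/-- Pairing map `H_k → (H_l)*`, `D ↦ (B ↦ ⟨B·D, Vol⟩)`. -/
noncomputable def pairMap (Vol : MvPolynomial (Fin m) ℝ) (k l : ℕ) :
    homogeneousSubmodule (Fin m) ℝ k →ₗ[ℝ]
      Module.Dual ℝ (homogeneousSubmodule (Fin m) ℝ l) :=
  (((LinearMap.mul ℝ (MvPolynomial (Fin m) ℝ)).compr₂ (contractL Vol)).flip.compl₁₂
    (homogeneousSubmodule (Fin m) ℝ k).subtype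
    (homogeneousSubmodule (Fin m) ℝ l).subtype)

lemma pairMap_apply (Vol : MvPolynomial (Fin m) ℝ) (k l : ℕ)
    (D : homogeneousSubmodule (Fin m) ℝ k) (B : homogeneousSubmodule (Fin m) ℝ l) :
    pairMap Vol k l D B
      = contract ((B : MvPolynomial (Fin m) ℝ) * (D : MvPolynomial (Fin m) ℝ)) Vol := rfl

lemma finrank_APpiece {n k l : ℕ} (hk : k ≤ n) (hl : l = n - k)
    (Vol : MvPolynomial (Fin m) ℝ) (hV : Vol.IsHomogeneous n) :
    Module.finrank ℝ (APpiece Vol k)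
      = Module.finrank ℝ (LinearMap.range (pairMap Vol k l)) := by
  set g : homogeneousSubmodule (Fin m) ℝ k →ₗ[ℝ] (MvPolynomial (Fin m) ℝ ⧸ annIdeal Vol) :=
    (Ideal.Quotient.mkₐ ℝ (annIdeal Vol)).toLinearMap ∘ₗ
      (homogeneousSubmodule (Fin m) ℝ k).subtype with hg
  have hrange : APpiece Vol k = LinearMap.range g := by
    rw [hg, LinearMap.range_comp, Submodule.range_subtype]; rfl
  have hker : LinearMap.ker g = LinearMap.ker (pairMap Vol k l) := by
    ext D
    simp only [LinearMap.mem_ker, hg, LinearMap.comp_apply, Submodule.coe_subtype,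
      AlgHom.toLinearMap_apply, Ideal.Quotient.mkₐ_eq_mk]
    rw [Ideal.Quotient.eq_zero_iff_mem, mem_ann_iff hk hl Vol hV D.1 D.2]
    constructor
    · intro h
      ext B
      simpa [pairMap_apply] using h B.1 B.2
    · intro h B hB
      have := congrArg (fun f => f (⟨B, hB⟩ : homogeneousSubmodule (Fin m) ℝ l)) h
      simpa [pairMap_apply] using this
  have h1 := LinearMap.finrank_range_add_finrank_ker g
  have h2 := LinearMap.finrank_range_add_finrank_ker (pairMap Vol k l)
  rw [hker] at h1
  rw [hrange]
  omega

set_option synthInstance.maxHeartbeats 1000000 in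
lemma finrank_range_pairMap_symm (Vol : MvPolynomial (Fin m) ℝ) (k l : ℕ) :
    Module.finrank ℝ (LinearMap.range (pairMap Vol k l))
      = Module.finrank ℝ (LinearMap.range (pairMap Vol l k)) := by
  have heq : pairMap Vol l k
      = (pairMap Vol k l).dualMap ∘ₗ Module.Dual.eval ℝ (homogeneousSubmodule (Fin m) ℝ l) := by
    ext B D
    simp only [LinearMap.comp_apply, LinearMap.dualMap_apply, Module.Dual.eval_apply,
      pairMap_apply]
    rw [mul_comm]
  have hsurj : Function.Surjective
      (Module.Dual.eval ℝ (homogeneousSubmodule (Fin m) ℝ l)) :=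
    (Module.bijective_dual_eval ℝ _).surjective
  rw [heq, LinearMap.range_comp, LinearMap.range_eq_top.mpr hsurj, Submodule.map_top,
    LinearMap.finrank_range_dualMap_eq_finrank_range]

end TimorinAux

/-- Timorin.  Let `P` be a simple `n`-polytope and
`A(P) = Diff/I`, `I` the annihilator of the volume polynomial `Vol`.  Then the
pairing `(α,β)_T = (αβ)(Vol)` is a nondegenerate pairing
`A_k(P) × A_{n−k}(P) → ℝ`; in particular `dim A_k(P) = dim A_{n−k}(P)`. -/
theorem timorin_pairing_nondegenerate {n m : ℕ}
    (ξ : Fin m → EuclideanSpace ℝ (Fin n)) (h₀ : Fin m → ℝ)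
    (hP : IsSimplePolytopeData ξ h₀)
    (Vol : MvPolynomial (Fin m) ℝ) (hhom : Vol.IsHomogeneous n)
    (U : Set (Fin m → ℝ)) (hU : IsOpen U) (hU₀ : h₀ ∈ U)
    (hvol : ∀ h ∈ U, (MeasureTheory.volume (polyOf ξ h)).toReal =
      MvPolynomial.eval h Vol) :
    ∀ k ≤ n,
      (∀ D ∈ MvPolynomial.homogeneousSubmodule (Fin m) ℝ k, D ∉ annIdeal Vol →
        ∃ B ∈ MvPolynomial.homogeneousSubmodule (Fin m) ℝ (n - k),
          contract (D * B) Vol ≠ 0) ∧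
      Module.finrank ℝ (APpiece Vol k) = Module.finrank ℝ (APpiece Vol (n - k)) := by
  intro k hk
  constructor
  · intro D hD hann
    by_contra hcon
    push_neg at hcon
    apply hann
    rw [TimorinAux.mem_ann_iff hk rfl Vol hhom D ((MvPolynomial.mem_homogeneousSubmodule _ _).mp hD)]
    intro B hB
    rw [mul_comm]
    exact hcon B hB
  · rw [TimorinAux.finrank_APpiece hk rfl Vol hhom,
      TimorinAux.finrank_APpiece (l := k) (Nat.sub_le n k) (by omega) Vol hhom,
      TimorinAux.finrank_range_pairMap_symm]
end

section
/- Let P be a simple n-polytope with facets P₁,...,P_m and corresponding derivations ∂₁,...,∂_m ∈ Diff acting on the volume polynomial Vol. Then: (1) for every a ∈ W, the operator i(a) = Σᵢ ξᵢ(a)∂ᵢ annihilates Vol (translation invariance); (2) if facets P_{i₁},...,P_{i_k} have empty intersection then ∂_{i₁}···∂_{i_k} annihilates Vol. -/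
open MeasureTheory

namespace TimorinAux

open MvPolynomial

section Algebra
variable {m : ℕ}

noncomputable def w (d : Fin m →₀ ℕ) : ℝ := ∏ i, (Nat.factorial (d i) : ℝ)

lemma contract_eq_sum (D F : MvPolynomial (Fin m) ℝ) {B : Finset (Fin m →₀ ℕ)}
    (hB : F.support ⊆ B) :
    contract D F = ∑ d ∈ B, w d * D.coeff d * F.coeff d := by
  refine Finset.sum_subset hB fun d _ hd => ?_
  rw [MvPolynomial.notMem_support_iff.mp hd, mul_zero]

lemma contract_def' (D F : MvPolynomial (Fin m) ℝ) :
    contract D F = ∑ d ∈ F.support, w d * D.coeff d * F.coeff d := rfl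

lemma contract_zero_right (D : MvPolynomial (Fin m) ℝ) : contract D 0 = 0 := by
  simp [contract]

lemma contract_add_right (D F G : MvPolynomial (Fin m) ℝ) :
    contract D (F + G) = contract D F + contract D G := by
  have h1 : (F + G).support ⊆ F.support ∪ G.support := MvPolynomial.support_add
  rw [contract_eq_sum D (F+G) h1, contract_eq_sum D F (Finset.subset_union_left),
    contract_eq_sum D G (Finset.subset_union_right), ← Finset.sum_add_distrib]
  exact Finset.sum_congr rfl fun d _ => by rw [MvPolynomial.coeff_add]; ring

lemma contract_sum_right {ι : Type*} (D : MvPolynomial (Fin m) ℝ) (A : Finset ι)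
    (G : ι → MvPolynomial (Fin m) ℝ) :
    contract D (∑ s ∈ A, G s) = ∑ s ∈ A, contract D (G s) := by
  classical
  induction A using Finset.induction_on with
  | empty => simp [contract_zero_right]
  | insert _ _ h ih => rw [Finset.sum_insert h, Finset.sum_insert h, contract_add_right, ih]

lemma contract_monomial (D : MvPolynomial (Fin m) ℝ) (s : Fin m →₀ ℕ) (a : ℝ) :
    contract D (MvPolynomial.monomial s a) = w s * D.coeff s * a := by
  rcases eq_or_ne a 0 with rfl | ha
  · simp [contract_zero_right]
  · rw [contract_def', MvPolynomial.support_monomial, if_neg ha, Finset.sum_singleton,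
      MvPolynomial.coeff_monomial, if_pos rfl]

lemma contract_sum_left {ι : Type*} (A : Finset ι) (D : ι → MvPolynomial (Fin m) ℝ)
    (F : MvPolynomial (Fin m) ℝ) :
    contract (∑ i ∈ A, D i) F = ∑ i ∈ A, contract (D i) F := by
  rw [contract_def']
  simp_rw [MvPolynomial.coeff_sum, Finset.mul_sum, Finset.sum_mul]
  exact Finset.sum_comm

lemma contract_C_mul_left (c : ℝ) (D F : MvPolynomial (Fin m) ℝ) :
    contract (MvPolynomial.C c * D) F = c * contract D F := by
  rw [contract_def', contract_def', Finset.mul_sum]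
  exact Finset.sum_congr rfl fun d _ => by rw [MvPolynomial.coeff_C_mul]; ring

lemma contract_C_mul_right (c : ℝ) (D F : MvPolynomial (Fin m) ℝ) :
    contract D (MvPolynomial.C c * F) = c * contract D F := by
  have h1 : (MvPolynomial.C c * F).support ⊆ F.support := by
    intro d hd
    rw [MvPolynomial.mem_support_iff] at hd ⊢
    rw [MvPolynomial.coeff_C_mul] at hd
    exact fun h => hd (by rw [h, mul_zero])
  rw [contract_eq_sum D _ h1, contract_def', Finset.mul_sum]
  exact Finset.sum_congr rfl fun d _ => by rw [MvPolynomial.coeff_C_mul]; ring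

lemma w_succ (s : Fin m →₀ ℕ) (i : Fin m) (hs : s i ≠ 0) :
    w s = w (s - Finsupp.single i 1) * (s i : ℝ) := by
  have key : ∀ f : Fin m →₀ ℕ, w f
      = ((f i).factorial : ℝ) * ∏ j ∈ Finset.univ.erase i, ((f j).factorial : ℝ) :=
    fun f => (Finset.mul_prod_erase _ _ (Finset.mem_univ i)).symm
  rw [key, key]
  have h2 : ∀ j ∈ Finset.univ.erase i,
      ((Nat.factorial ((s - Finsupp.single i 1 : Fin m →₀ ℕ) j) : ℝ)) = (Nat.factorial (s j) : ℝ) := by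
    intro j hj
    rw [Finsupp.tsub_apply, Finsupp.single_apply, if_neg (Finset.ne_of_mem_erase hj).symm]
    simp
  rw [Finset.prod_congr rfl h2]
  have h3 : (s - Finsupp.single i 1 : Fin m →₀ ℕ) i = s i - 1 := by
    rw [Finsupp.tsub_apply, Finsupp.single_apply, if_pos rfl]
  rw [h3]
  obtain ⟨k, hk⟩ := Nat.exists_eq_succ_of_ne_zero hs
  rw [hk]
  simp [Nat.factorial_succ]
  ring

lemma contract_mul_X (E F : MvPolynomial (Fin m) ℝ) (i : Fin m) :
    contract (E * MvPolynomial.X i) F = contract E (MvPolynomial.pderiv i F) := by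
  classical
  conv_rhs => rw [← MvPolynomial.support_sum_monomial_coeff F]
  rw [map_sum (MvPolynomial.pderiv i), contract_sum_right, contract_def']
  refine Finset.sum_congr rfl fun s _ => ?_
  rw [MvPolynomial.pderiv_monomial, contract_monomial, MvPolynomial.coeff_mul_X']
  rcases eq_or_ne (s i) 0 with h0 | h0
  · rw [if_neg (by simp [Finsupp.mem_support_iff, h0]), h0]
    simp
  · rw [if_pos (by simp [Finsupp.mem_support_iff, h0]), w_succ s i h0]
    ring


lemma pderiv_comm' (i j : Fin m) (F : MvPolynomial (Fin m) ℝ) :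
    pderiv i (pderiv j F) = pderiv j (pderiv i F) := by
  induction F using MvPolynomial.induction_on with
  | C a => simp
  | add p q hp hq => simp [hp, hq]
  | mul_X p k hp =>
      have h1 : ∀ a b : Fin m, (pderiv a) ((Pi.single b 1 : Fin m → MvPolynomial (Fin m) ℝ) k) = 0 := by
        intro a b
        rcases eq_or_ne k b with rfl | hne
        · rw [Pi.single_eq_same, ← C_1, pderiv_C]
        · rw [Pi.single_eq_of_ne hne, map_zero]
      simp [pderiv_mul, hp, h1]
      ring

noncomputable def pdS (S : Finset (Fin m)) : Module.End ℝ (MvPolynomial (Fin m) ℝ) :=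
  S.noncommProd (fun i => ((pderiv i : Derivation ℝ _ _) : MvPolynomial (Fin m) ℝ →ₗ[ℝ] MvPolynomial (Fin m) ℝ))
    (fun i _ j _ _ => LinearMap.ext fun F => by
      simp only [Module.End.mul_apply, Derivation.coeFn_coe]
      exact pderiv_comm' i j F)

lemma pdS_empty (F : MvPolynomial (Fin m) ℝ) : pdS ∅ F = F := by
  exact congrArg (fun g : Module.End ℝ (MvPolynomial (Fin m) ℝ) => g F) (Finset.noncommProd_empty _ _)

lemma pdS_insert {S : Finset (Fin m)} {i : Fin m} (hi : i ∉ S) (F : MvPolynomial (Fin m) ℝ) :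
    pdS (insert i S) F = pderiv i (pdS S F) := by
  exact congrArg (fun g : Module.End ℝ (MvPolynomial (Fin m) ℝ) => g F)
    (Finset.noncommProd_insert_of_notMem S i (fun i => ((pderiv i : Derivation ℝ _ _) : MvPolynomial (Fin m) ℝ →ₗ[ℝ] MvPolynomial (Fin m) ℝ)) _ hi)

noncomputable def lineP (h c : Fin m → ℝ) : MvPolynomial (Fin m) ℝ →ₐ[ℝ] Polynomial ℝ :=
  aeval (fun i => Polynomial.C (h i) + Polynomial.C (c i) * Polynomial.X)

lemma lineP_eval (h c : Fin m → ℝ) (F : MvPolynomial (Fin m) ℝ) (t : ℝ) :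
    (lineP h c F).eval t = eval (fun j => h j + t * c j) F := by
  rw [lineP, aeval_def, polynomial_eval_eval₂]
  rw [show ((Polynomial.evalRingHom t).comp (algebraMap ℝ (Polynomial ℝ))) = RingHom.id ℝ by
    ext r; simp]
  rw [eval₂_id]
  have : (fun s => Polynomial.eval t (Polynomial.C (h s) + Polynomial.C (c s) * Polynomial.X))
      = fun j => h j + t * c j := by
    funext j
    simp
    ring
  rw [this]

lemma lineP_coeff_zero (h c : Fin m → ℝ) (F : MvPolynomial (Fin m) ℝ) :
    (lineP h c F).coeff 0 = eval h F := by
  rw [Polynomial.coeff_zero_eq_eval_zero, lineP_eval]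
  have : (fun j => h j + 0 * c j) = h := by funext j; ring
  rw [this]

lemma lineP_coeff_one (h c : Fin m → ℝ) (F : MvPolynomial (Fin m) ℝ) :
    (lineP h c F).coeff 1 = ∑ i, c i * eval h (pderiv i F) := by
  induction F using MvPolynomial.induction_on with
  | C a => simp [lineP]
  | add p q hp hq =>
      rw [map_add, Polynomial.coeff_add, hp, hq, ← Finset.sum_add_distrib]
      refine Finset.sum_congr rfl fun i _ => ?_
      rw [map_add, map_add]
      ring
  | mul_X p k hp =>
      have e1 : lineP h c (p * X k)
          = lineP h c p * (Polynomial.C (h k) + Polynomial.C (c k) * Polynomial.X) := by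
        rw [map_mul]
        congr 1
        simp [lineP]
      rw [e1]
      have e2 : (lineP h c p * (Polynomial.C (h k) + Polynomial.C (c k) * Polynomial.X)).coeff 1
          = (lineP h c p).coeff 1 * h k + (lineP h c p).coeff 0 * c k := by
        rw [mul_add, Polynomial.coeff_add, Polynomial.coeff_mul_C]
        have h3 : lineP h c p * (Polynomial.C (c k) * Polynomial.X)
            = (lineP h c p * Polynomial.X) * Polynomial.C (c k) := by ring
        rw [h3, Polynomial.coeff_mul_C, Polynomial.coeff_mul_X]
      rw [e2, hp, lineP_coeff_zero]
      have e3 : ∀ i : Fin m, c i * eval h (pderiv i (p * X k))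
          = (c i * eval h (pderiv i p)) * h k + (if k = i then eval h p * c i else 0) := by
        intro i
        rw [pderiv_mul, map_add, map_mul, map_mul, eval_X, pderiv_X, Pi.single_apply]
        rcases eq_or_ne k i with rfl | hk
        · rw [if_pos rfl, if_pos rfl]
          simp
          ring
        · rw [if_neg hk, if_neg hk]
          simp
          ring
      rw [Finset.sum_congr rfl (fun i _ => e3 i), Finset.sum_add_distrib, ← Finset.sum_mul,
        Finset.sum_ite_eq Finset.univ k (fun i => eval h p * c i), if_pos (Finset.mem_univ k)]
      try ring

lemma eval_eq_zero_of_cube {Q : MvPolynomial (Fin m) ℝ} {h₀ : Fin m → ℝ} {δ : ℝ} (hδ : 0 < δ)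
    (H : ∀ h : Fin m → ℝ, (∀ j, |h j - h₀ j| < δ) → eval h Q = 0) : Q = 0 := by
  apply MvPolynomial.funext
  intro x
  rw [map_zero]
  set c : Fin m → ℝ := fun j => x j - h₀ j with hc
  set r : ℝ := δ / (‖c‖ + 1) with hr
  have hnorm : (0:ℝ) ≤ ‖c‖ := norm_nonneg c
  have hrpos : 0 < r := div_pos hδ (by linarith)
  have hroot : ∀ t ∈ Set.Ioo (-r) r, (lineP h₀ c Q).IsRoot t := by
    intro t ht
    have ht' : |t| < r := abs_lt.mpr ⟨ht.1, ht.2⟩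
    have hb : ∀ j, |h₀ j + t * c j - h₀ j| < δ := by
      intro j
      have h1 : |c j| ≤ ‖c‖ := by simpa using norm_le_pi_norm c j
      have h2 : |t * c j| ≤ |t| * ‖c‖ := by
        rw [abs_mul]
        exact mul_le_mul_of_nonneg_left h1 (abs_nonneg t)
      have h4 : |t| * ‖c‖ < r * (‖c‖ + 1) := by
        apply mul_lt_mul_of_nonneg_of_pos' (le_of_lt ht') (by linarith) (by linarith) hrpos
      have h5 : r * (‖c‖ + 1) = δ := by
        rw [hr, div_mul_cancel₀ _ (by positivity)]
      have : |t * c j| < δ := by rw [← h5]; exact lt_of_le_of_lt h2 h4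
      simpa using this
    have := H _ hb
    rw [Polynomial.IsRoot, lineP_eval]
    exact this
  have hinf : {t : ℝ | (lineP h₀ c Q).IsRoot t}.Infinite :=
    Set.Infinite.mono hroot (Set.Ioo_infinite (by linarith))
  have hzero : lineP h₀ c Q = 0 := Polynomial.eq_zero_of_infinite_isRoot _ hinf
  have h1 := lineP_eval h₀ c Q 1
  rw [hzero] at h1
  have hx : (fun j => h₀ j + 1 * c j) = x := by funext j; simp [hc]
  rw [hx] at h1
  simpa using h1.symm


noncomputable def shiftP (i : Fin m) (c : ℝ) : MvPolynomial (Fin m) ℝ →ₐ[ℝ] MvPolynomial (Fin m) ℝ :=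
  aeval (fun j => if j = i then X j - C c else X j)

lemma eval_shiftP (i : Fin m) (c : ℝ) (x : Fin m → ℝ) (F : MvPolynomial (Fin m) ℝ) :
    eval x (shiftP i c F) = eval (fun j => if j = i then x j - c else x j) F := by
  rw [shiftP, aeval_def, eval_eval₂]
  rw [show ((eval x).comp (algebraMap ℝ (MvPolynomial (Fin m) ℝ))) = RingHom.id ℝ by
    ext r; simp]
  rw [eval₂_id]
  have : (fun s => eval x (if s = i then X s - C c else X s))
      = fun j => if j = i then x j - c else x j := by
    funext j
    rcases eq_or_ne j i with rfl | hj
    · simp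
    · simp [hj]
  rw [this]

lemma pderiv_shiftP (i : Fin m) (c : ℝ) (j : Fin m) (F : MvPolynomial (Fin m) ℝ) :
    pderiv j (shiftP i c F) = shiftP i c (pderiv j F) := by
  induction F using MvPolynomial.induction_on with
  | C a => simp [shiftP]
  | add p q hp hq => simp [map_add, hp, hq]
  | mul_X p k hp =>
      have e0 : shiftP i c (X k) = X k - (if k = i then C c else 0) := by
        rcases eq_or_ne k i with rfl | hk
        · simp [shiftP]
        · simp [shiftP, hk]
      have e3 : pderiv j (shiftP i c (X k)) = pderiv j (X k) := by
        rw [e0, map_sub]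
        have h9 : pderiv j ((if k = i then C c else 0 : MvPolynomial (Fin m) ℝ)) = 0 := by
          split <;> simp
        rw [h9, sub_zero]
      have e2' : shiftP i c (pderiv j (X k)) = pderiv j (X k) := by
        rw [pderiv_X]
        rcases eq_or_ne k j with rfl | hk
        · rw [Pi.single_eq_same]; exact map_one _
        · rw [Pi.single_eq_of_ne hk]; exact map_zero _
      calc pderiv j (shiftP i c (p * X k))
          = pderiv j (shiftP i c p * shiftP i c (X k)) := by rw [map_mul]
        _ = pderiv j (shiftP i c p) * shiftP i c (X k)
            + shiftP i c p * pderiv j (shiftP i c (X k)) := pderiv_mul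
        _ = shiftP i c (pderiv j p) * shiftP i c (X k) + shiftP i c p * pderiv j (X k) := by
            rw [hp, e3]
        _ = shiftP i c (pderiv j (p * X k)) := by
            rw [pderiv_mul, map_add, map_mul, map_mul, e2']

lemma pdS_shiftP (S : Finset (Fin m)) (i : Fin m) (c : ℝ) (F : MvPolynomial (Fin m) ℝ) :
    pdS S (shiftP i c F) = shiftP i c (pdS S F) := by
  classical
  induction S using Finset.induction_on generalizing F with
  | empty => rw [pdS_empty, pdS_empty]
  | @insert j T hj ih => rw [pdS_insert hj, pdS_insert hj, ih, pderiv_shiftP]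

/-- Key induction: vanishing of all small mixed finite differences forces the
mixed partial derivative to vanish. -/
lemma diff_vanish (S : Finset (Fin m)) (F : MvPolynomial (Fin m) ℝ) (h₀ : Fin m → ℝ)
    (δ : ℝ) (hδ : 0 < δ)
    (H : ∀ h : Fin m → ℝ, (∀ j, |h j - h₀ j| < δ) → ∀ s : Fin m → ℝ,
      (∀ j, s j ∈ Set.Ioo (0:ℝ) δ) →
      ∑ T ∈ S.powerset, (-1 : ℝ)^T.card
        * eval (fun j => h j - if j ∈ T then s j else 0) F = 0) :
    pdS S F = 0 := by
  classical
  induction S using Finset.induction_on generalizing F with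
  | empty =>
      rw [pdS_empty]
      refine eval_eq_zero_of_cube (h₀ := h₀) hδ fun h hh => ?_
      have := H h hh (fun _ => δ/2) (fun j => ⟨by linarith, by linarith⟩)
      simpa using this
  | @insert i S' hi ih =>
      rw [pdS_insert hi]
      -- for each c ∈ (0,δ), pdS S' F is invariant under shift by c in direction i
      have key : ∀ c ∈ Set.Ioo (0:ℝ) δ, pdS S' F = shiftP i c (pdS S' F) := by
        intro c hc
        have hG : pdS S' (F - shiftP i c F) = 0 := by
          apply ih
          intro h hh s hs
          have hmain := H h hh (Function.update s i c)
            (fun j => by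
              rcases eq_or_ne j i with rfl | hj
              · rw [Function.update_self]; exact hc
              · rw [Function.update_of_ne hj]; exact hs j)
          rw [Finset.sum_powerset_insert hi] at hmain
          have e4 : ∀ T ∈ S'.powerset,
              (-1:ℝ)^T.card * eval (fun j => h j - if j ∈ T then s j else 0) (F - shiftP i c F)
              = (-1:ℝ)^T.card * eval (fun j => h j - if j ∈ T then Function.update s i c j else 0) F
                + (-1:ℝ)^(insert i T).card * eval (fun j => h j - if j ∈ insert i T then Function.update s i c j else 0) F := by
            intro T hT
            have hiT : i ∉ T := fun hmem => hi (Finset.mem_powerset.mp hT hmem)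
            have hcard : (insert i T).card = T.card + 1 := Finset.card_insert_of_notMem hiT
            have efun : (fun j => h j - if j ∈ T then Function.update s i c j else 0)
                = (fun j => h j - if j ∈ T then s j else 0) := by
              funext j
              rcases eq_or_ne j i with rfl | hj
              · rw [if_neg hiT, if_neg hiT]
              · rw [Function.update_of_ne hj]
            have eshift : eval (fun j => h j - if j ∈ T then s j else 0) (shiftP i c F)
                = eval (fun j => h j - if j ∈ insert i T then Function.update s i c j else 0) F := by
              rw [eval_shiftP]
              have e9 : (fun j => if j = i then (h j - if j ∈ T then s j else 0) - c
                    else h j - if j ∈ T then s j else 0)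
                  = (fun j => h j - if j ∈ insert i T then Function.update s i c j else 0) := by
                funext j
                rcases eq_or_ne j i with rfl | hj
                · rw [if_pos rfl, if_pos (Finset.mem_insert_self j T), Function.update_self,
                    if_neg hiT]
                  ring
                · rw [if_neg hj, Function.update_of_ne hj]
                  by_cases hjT : j ∈ T
                  · rw [if_pos hjT, if_pos (Finset.mem_insert_of_mem hjT)]
                  · rw [if_neg hjT, if_neg (by simp [hj, hjT])]
              rw [e9]
            rw [map_sub, hcard, efun, pow_succ]
            rw [eshift]
            ring
          rw [Finset.sum_congr rfl e4, Finset.sum_add_distrib]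
          exact hmain
        rw [map_sub, pdS_shiftP, sub_eq_zero] at hG
        exact hG
      -- hence the i-th partial derivative of K := pdS S' F vanishes
      set K := pdS S' F with hK
      refine eval_eq_zero_of_cube (Q := pderiv i K) (h₀ := h₀) hδ fun x _ => ?_
      set dir : Fin m → ℝ := fun j => if j = i then 1 else 0 with hdir
      have hp0 : ∀ c ∈ Set.Ioo (0:ℝ) δ, (lineP x dir K).eval (-c) = (lineP x dir K).eval 0 := by
        intro c hc
        rw [lineP_eval, lineP_eval]
        have e5 : (fun j => x j + (-c) * dir j) = fun j => if j = i then x j - c else x j := by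
          funext j
          by_cases hj : j = i
          · subst hj; simp [hdir]; ring
          · simp [hdir, hj]
        have e6 : (fun j => x j + 0 * dir j) = x := by funext j; ring
        rw [e5, e6, ← eval_shiftP, ← key c hc]
      have hconst : lineP x dir K - Polynomial.C ((lineP x dir K).eval 0) = 0 := by
        apply Polynomial.eq_zero_of_infinite_isRoot
        apply Set.Infinite.mono (s := (fun c => -c) '' Set.Ioo (0:ℝ) δ)
        · rintro t ⟨c, hc, rfl⟩
          simp [Polynomial.IsRoot, hp0 c hc]
        · exact Set.Infinite.image (fun a _ b _ hab => by linarith [neg_injective hab]) (Set.Ioo_infinite hδ)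
      have hcoeff : (lineP x dir K).coeff 1 = 0 := by
        have := congrArg (fun p => Polynomial.coeff p 1) hconst
        simpa using this
      rw [lineP_coeff_one] at hcoeff
      have e7 : ∀ j, dir j * eval x (pderiv j K) = if j = i then eval x (pderiv i K) else 0 := by
        intro j
        by_cases hj : j = i
        · subst hj; simp [hdir]
        · simp [hdir, hj]
      rw [Finset.sum_congr rfl (fun j _ => e7 j), Finset.sum_ite_eq' Finset.univ i
        (fun _ => eval x (pderiv i K)), if_pos (Finset.mem_univ i)] at hcoeff
      exact hcoeff


lemma contract_prod_X (S : Finset (Fin m)) :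
    ∀ E F : MvPolynomial (Fin m) ℝ,
      contract (E * ∏ i ∈ S, MvPolynomial.X i) F = contract E (pdS S F) := by
  classical
  induction S using Finset.induction_on with
  | empty => intro E F; rw [Finset.prod_empty, mul_one, pdS_empty]
  | @insert i T hi ih =>
      intro E F
      rw [Finset.prod_insert hi, pdS_insert hi]
      have h1 : E * (MvPolynomial.X i * ∏ j ∈ T, MvPolynomial.X j)
          = (E * MvPolynomial.X i) * ∏ j ∈ T, MvPolynomial.X j := by ring
      rw [h1, ih (E * MvPolynomial.X i) F, contract_mul_X]

end Algebra

section Geometry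
variable {n m : ℕ}

lemma isClosed_polyOf (ξ : Fin m → EuclideanSpace ℝ (Fin n)) (h : Fin m → ℝ) :
    IsClosed (polyOf ξ h) := by
  have : polyOf ξ h = ⋂ i, (fun y => (inner ℝ (ξ i) y : ℝ)) ⁻¹' Set.Iic (h i) := by
    ext y; simp [polyOf, Set.mem_iInter]
  rw [this]
  exact isClosed_iInter fun i =>
    IsClosed.preimage (Continuous.inner continuous_const continuous_id) isClosed_Iic

lemma polyOf_mono (ξ : Fin m → EuclideanSpace ℝ (Fin n)) {h h' : Fin m → ℝ}
    (hle : ∀ i, h i ≤ h' i) : polyOf ξ h ⊆ polyOf ξ h' :=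
  fun y hy i => le_trans (hy i) (hle i)

lemma polyOf_bounded (ξ : Fin m → EuclideanSpace ℝ (Fin n)) (h₀ : Fin m → ℝ)
    (hcomp : IsCompact (polyOf ξ h₀)) (hint : (interior (polyOf ξ h₀)).Nonempty)
    (hm : Nonempty (Fin m)) (C : ℝ) (hC0 : 0 < C) :
    Bornology.IsBounded (polyOf ξ (fun i => h₀ i + C)) := by
  classical
  obtain ⟨x₀, hx₀⟩ := hint
  obtain ⟨r, hr, hball⟩ := Metric.isOpen_iff.mp isOpen_interior x₀ hx₀
  have hball' : Metric.ball x₀ r ⊆ polyOf ξ h₀ := hball.trans interior_subset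
  have hx₀P : x₀ ∈ polyOf ξ h₀ := hball' (Metric.mem_ball_self hr)
  have hmargin : ∀ i, ξ i ≠ 0 → (inner ℝ (ξ i) x₀ : ℝ) + (r/2) * ‖ξ i‖ ≤ h₀ i := by
    intro i hξ
    have hnorm : (0:ℝ) < ‖ξ i‖ := norm_pos_iff.mpr hξ
    set y : EuclideanSpace ℝ (Fin n) := x₀ + ((r/2) * ‖ξ i‖⁻¹) • ξ i with hy
    have hyball : y ∈ Metric.ball x₀ r := by
      rw [Metric.mem_ball, dist_eq_norm, hy]
      have : x₀ + ((r/2) * ‖ξ i‖⁻¹) • ξ i - x₀ = ((r/2) * ‖ξ i‖⁻¹) • ξ i := by abel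
      rw [this, norm_smul]
      have : ‖(r/2) * ‖ξ i‖⁻¹‖ = (r/2) * ‖ξ i‖⁻¹ := by
        rw [Real.norm_eq_abs, abs_of_pos (by positivity)]
      rw [this]
      rw [mul_assoc, inv_mul_cancel₀ (ne_of_gt hnorm), mul_one]
      linarith
    have hyP := hball' hyball
    have hinner := hyP i
    rw [hy, inner_add_right, real_inner_smul_right, real_inner_self_eq_norm_sq] at hinner
    have : (r/2) * ‖ξ i‖⁻¹ * ‖ξ i‖^2 = (r/2) * ‖ξ i‖ := by
      field_simp
    rw [this] at hinner
    exact hinner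
  have huniv : (Finset.univ : Finset (Fin m)).Nonempty := Finset.univ_nonempty
  set g : ℝ := Finset.univ.inf' huniv
    (fun i => if ξ i = 0 then 1 else h₀ i - (inner ℝ (ξ i) x₀ : ℝ)) with hgdef
  have hgpos : 0 < g := by
    rw [hgdef, Finset.lt_inf'_iff]
    intro i _
    by_cases hξ : ξ i = 0
    · rw [if_pos hξ]; norm_num
    · rw [if_neg hξ]
      have := hmargin i hξ
      have hnorm : (0:ℝ) < ‖ξ i‖ := norm_pos_iff.mpr hξ
      nlinarith
  have hgle : ∀ i, ξ i ≠ 0 → g ≤ h₀ i - (inner ℝ (ξ i) x₀ : ℝ) := by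
    intro i hξ
    have := Finset.inf'_le (b := i)
      (fun i => if ξ i = 0 then 1 else h₀ i - (inner ℝ (ξ i) x₀ : ℝ)) (Finset.mem_univ i)
    rwa [if_neg hξ] at this
  set lam : ℝ := g / (g + C) with hlam
  have hlampos : 0 < lam := div_pos hgpos (by linarith)
  have hkey : ∀ y ∈ polyOf ξ (fun i => h₀ i + C), x₀ + lam • (y - x₀) ∈ polyOf ξ h₀ := by
    intro y hyP i
    rw [inner_add_right, real_inner_smul_right, inner_sub_right]
    by_cases hξ : ξ i = 0
    · have h1 : (inner ℝ (ξ i) x₀ : ℝ) = 0 := by rw [hξ, inner_zero_left]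
      have h2 : (inner ℝ (ξ i) y : ℝ) = 0 := by rw [hξ, inner_zero_left]
      have h3 := hx₀P i
      rw [h1] at h3 ⊢
      rw [h2]
      simpa using h3
    · have hgi := hgle i hξ
      have hyi := hyP i
      simp only at hyi
      have hgipos : 0 < h₀ i - (inner ℝ (ξ i) x₀ : ℝ) := lt_of_lt_of_le hgpos hgi
      have hlamle : lam * ((h₀ i - (inner ℝ (ξ i) x₀ : ℝ)) + C) ≤ h₀ i - (inner ℝ (ξ i) x₀ : ℝ) := by
        rw [hlam, div_mul_eq_mul_div, div_le_iff₀ (by linarith)]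
        nlinarith
      nlinarith [hlampos]
  obtain ⟨R, hRpos, hR⟩ := hcomp.isBounded.subset_closedBall_lt 0 x₀
  have : polyOf ξ (fun i => h₀ i + C) ⊆ Metric.closedBall x₀ (R / lam) := by
    intro y hy
    have hz := hR (hkey y hy)
    rw [Metric.mem_closedBall] at hz ⊢
    have hdist : dist (x₀ + lam • (y - x₀)) x₀ = lam * dist y x₀ := by
      rw [dist_eq_norm, dist_eq_norm]
      have : x₀ + lam • (y - x₀) - x₀ = lam • (y - x₀) := by abel
      rw [this, norm_smul, Real.norm_eq_abs, abs_of_pos hlampos]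
    rw [hdist] at hz
    rw [div_eq_mul_inv]
    calc dist y x₀ = (lam * dist y x₀) * lam⁻¹ := by field_simp
      _ ≤ R * lam⁻¹ := by
          apply mul_le_mul_of_nonneg_right hz (le_of_lt (inv_pos.mpr hlampos))
  exact Bornology.IsBounded.subset (Metric.isBounded_closedBall) this


/-- The "slab" sets whose emptiness for some positive width follows from the
emptiness of the face. -/
def slabSet (ξ : Fin m → EuclideanSpace ℝ (Fin n)) (h₀ : Fin m → ℝ) (S : Finset (Fin m))
    (c : ℝ) : Set (EuclideanSpace ℝ (Fin n)) :=
  {y | (∀ i, (inner ℝ (ξ i) y : ℝ) ≤ h₀ i + c) ∧ ∀ i ∈ S, h₀ i - c ≤ (inner ℝ (ξ i) y : ℝ)}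

lemma isClosed_slabSet (ξ : Fin m → EuclideanSpace ℝ (Fin n)) (h₀ : Fin m → ℝ)
    (S : Finset (Fin m)) (c : ℝ) : IsClosed (slabSet ξ h₀ S c) := by
  have : slabSet ξ h₀ S c =
      (⋂ i, (fun y => (inner ℝ (ξ i) y : ℝ)) ⁻¹' Set.Iic (h₀ i + c)) ∩
      (⋂ i ∈ S, (fun y => (inner ℝ (ξ i) y : ℝ)) ⁻¹' Set.Ici (h₀ i - c)) := by
    ext y
    simp [slabSet, Set.mem_iInter]
  rw [this]
  refine IsClosed.inter (isClosed_iInter fun i => IsClosed.preimage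
    (Continuous.inner continuous_const continuous_id) isClosed_Iic) ?_
  exact isClosed_biInter fun i _ => IsClosed.preimage
    (Continuous.inner continuous_const continuous_id) isClosed_Ici

lemma exists_empty_slab (ξ : Fin m → EuclideanSpace ℝ (Fin n)) (h₀ : Fin m → ℝ)
    (S : Finset (Fin m)) (hcomp : IsCompact (polyOf ξ h₀))
    (hint : (interior (polyOf ξ h₀)).Nonempty) (hm : Nonempty (Fin m))
    (hface : {y ∈ polyOf ξ h₀ | ∀ i ∈ S, (inner ℝ (ξ i) y : ℝ) = h₀ i} = ∅) :
    ∃ N : ℕ, slabSet ξ h₀ S (1/(N+1)) = ∅ := by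
  by_contra hcon
  push_neg at hcon
  have hne : ∀ N : ℕ, (slabSet ξ h₀ S (1/(N+1))).Nonempty := hcon
  set t : ℕ → Set (EuclideanSpace ℝ (Fin n)) := fun N => slabSet ξ h₀ S (1/(N+1)) with ht
  have hmono : ∀ N : ℕ, t (N+1) ⊆ t N := by
    intro N y hy
    obtain ⟨hy1, hy2⟩ := hy
    have hc : (1:ℝ)/((N:ℝ)+1+1) ≤ 1/((N:ℝ)+1) := by
      apply div_le_div_of_nonneg_left (by norm_num) (by positivity) (by linarith)
    constructor
    · intro i
      have := hy1 i
      push_cast at this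
      linarith
    · intro i hi
      have := hy2 i hi
      push_cast at this
      linarith
  have hbdd : Bornology.IsBounded (polyOf ξ (fun i => h₀ i + 1)) :=
    polyOf_bounded ξ h₀ hcomp hint hm 1 one_pos
  obtain ⟨R, hRpos, hR⟩ := hbdd.subset_closedBall_lt 0 0
  have hsub : ∀ N : ℕ, t N ⊆ Metric.closedBall 0 R := by
    intro N y hy
    apply hR
    intro i
    have h1 := hy.1 i
    have hc : (1:ℝ)/((N:ℝ)+1) ≤ 1 := by
      apply div_le_one_of_le₀ <;> [linarith; positivity]
    calc (inner ℝ (ξ i) y : ℝ) ≤ h₀ i + 1/((N:ℝ)+1) := h1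
      _ ≤ h₀ i + 1 := by linarith
  have hcompact : ∀ N : ℕ, IsCompact (t N) := fun N =>
    IsCompact.of_isClosed_subset (isCompact_closedBall 0 R) (isClosed_slabSet ξ h₀ S _) (hsub N)
  have hinter := IsCompact.nonempty_iInter_of_sequence_nonempty_isCompact_isClosed t hmono hne
    (hcompact 0) (fun N => isClosed_slabSet ξ h₀ S _)
  obtain ⟨y, hy⟩ := hinter
  rw [Set.mem_iInter] at hy
  have hyP : y ∈ polyOf ξ h₀ := by
    intro i
    by_contra hlt
    push_neg at hlt
    obtain ⟨N, hN⟩ := exists_nat_gt (1 / ((inner ℝ (ξ i) y : ℝ) - h₀ i))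
    have h2 := (hy N).1 i
    have hpos : 0 < (inner ℝ (ξ i) y : ℝ) - h₀ i := by linarith
    have hNpos : (0:ℝ) < N + 1 := by positivity
    have : (1:ℝ)/(N+1) < (inner ℝ (ξ i) y : ℝ) - h₀ i := by
      rw [div_lt_iff₀ hNpos]
      rw [div_lt_iff₀ hpos] at hN
      nlinarith
    linarith
  have hyF : ∀ i ∈ S, (inner ℝ (ξ i) y : ℝ) = h₀ i := by
    intro i hi
    refine le_antisymm (hyP i) ?_
    by_contra hlt
    push_neg at hlt
    obtain ⟨N, hN⟩ := exists_nat_gt (1 / (h₀ i - (inner ℝ (ξ i) y : ℝ)))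
    have h2 := (hy N).2 i hi
    have hpos : 0 < h₀ i - (inner ℝ (ξ i) y : ℝ) := by linarith
    have hNpos : (0:ℝ) < N + 1 := by positivity
    have : (1:ℝ)/(N+1) < h₀ i - (inner ℝ (ξ i) y : ℝ) := by
      rw [div_lt_iff₀ hNpos]
      rw [div_lt_iff₀ hpos] at hN
      nlinarith
    linarith
  have : y ∈ {y ∈ polyOf ξ h₀ | ∀ i ∈ S, (inner ℝ (ξ i) y : ℝ) = h₀ i} := ⟨hyP, hyF⟩
  rw [hface] at this
  exact this


lemma volume_diff_zero (ξ : Fin m → EuclideanSpace ℝ (Fin n)) (h₀ : Fin m → ℝ)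
    (S : Finset (Fin m)) (hcomp : IsCompact (polyOf ξ h₀))
    (hint : (interior (polyOf ξ h₀)).Nonempty) (hm : Nonempty (Fin m)) (N : ℕ)
    (hslab : slabSet ξ h₀ S (1/(N+1)) = ∅) (δ : ℝ) (hδpos : 0 < δ)
    (hδ1 : δ ≤ 1/(2*((N:ℝ)+1)))
    (h s : Fin m → ℝ) (hh : ∀ j, |h j - h₀ j| < δ) (hs : ∀ j, s j ∈ Set.Ioo (0:ℝ) δ) :
    ∑ T ∈ S.powerset, (-1:ℝ)^T.card *
      (volume (polyOf ξ (fun j => h j - if j ∈ T then s j else 0))).toReal = 0 := by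
  classical
  have hNpos : (0:ℝ) < (N:ℝ) + 1 := by positivity
  have hhalf : (1:ℝ)/(2*((N:ℝ)+1)) ≤ 1/((N:ℝ)+1) := by
    apply div_le_div_of_nonneg_left (by norm_num) hNpos (by linarith)
  have hδN : δ ≤ 1/((N:ℝ)+1) := le_trans hδ1 hhalf
  have hδhalf : 2*δ ≤ 1/((N:ℝ)+1) := by
    have he : 2*(1/(2*((N:ℝ)+1))) = 1/((N:ℝ)+1) := by field_simp
    linarith
  have hδle1 : δ ≤ 1 := by
    have : (1:ℝ)/(2*((N:ℝ)+1)) ≤ 1 := by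
      apply div_le_one_of_le₀ <;> linarith
    linarith
  set PT : Finset (Fin m) → Set (EuclideanSpace ℝ (Fin n)) :=
    fun T => polyOf ξ (fun j => h j - if j ∈ T then s j else 0) with hPT
  have hPTsub : ∀ T, PT T ⊆ polyOf ξ h := by
    intro T
    apply polyOf_mono
    intro j
    have := (hs j).1
    split <;> linarith
  have hPTball : ∀ T, PT T ⊆ polyOf ξ (fun j => h₀ j + 1) := by
    intro T
    apply polyOf_mono
    intro j
    have h1 := (hs j).1
    have h2 := (abs_lt.mp (hh j)).2
    split <;> linarith
  obtain ⟨R, hRpos, hR⟩ :=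
    (polyOf_bounded ξ h₀ hcomp hint hm 1 one_pos).subset_closedBall_lt 0 0
  have hfin : ∀ T, volume (PT T) < ⊤ := by
    intro T
    calc volume (PT T) ≤ volume (Metric.closedBall 0 R) :=
          measure_mono ((hPTball T).trans hR)
      _ < ⊤ := (isCompact_closedBall 0 R).measure_lt_top
  have hmeas : ∀ T, MeasurableSet (PT T) := fun T => (isClosed_polyOf ξ _).measurableSet
  set f : Finset (Fin m) → EuclideanSpace ℝ (Fin n) → ℝ :=
    fun T => (PT T).indicator (fun _ => (-1:ℝ)^T.card) with hf
  have hpt : ∀ y, ∑ T ∈ S.powerset, f T y = 0 := by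
    intro y
    by_cases hy : y ∈ polyOf ξ h
    · have hex : ∃ i ∈ S, (inner ℝ (ξ i) y : ℝ) ≤ h i - s i := by
        by_contra hcon
        push_neg at hcon
        have hmem : y ∈ slabSet ξ h₀ S (1/(N+1)) := by
          constructor
          · intro j
            have h1 := hy j
            have h2 := (abs_lt.mp (hh j)).2
            calc (inner ℝ (ξ j) y : ℝ) ≤ h j := h1
              _ ≤ h₀ j + 1/((N:ℝ)+1) := by linarith
          · intro i hi
            have h1 := hcon i hi
            have h2 := (abs_lt.mp (hh i)).1
            have h3 := (hs i).2
            calc h₀ i - 1/((N:ℝ)+1) ≤ h₀ i - 2*δ := by linarith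
              _ ≤ h i - s i := by linarith
              _ ≤ (inner ℝ (ξ i) y : ℝ) := le_of_lt h1
        rw [hslab] at hmem
        exact hmem
      obtain ⟨i₀, hi₀S, hi₀⟩ := hex
      have hS' : insert i₀ (S.erase i₀) = S := Finset.insert_erase hi₀S
      rw [← hS', Finset.sum_powerset_insert (Finset.notMem_erase i₀ S)]
      have hcancel : ∀ T ∈ (S.erase i₀).powerset, f T y + f (insert i₀ T) y = 0 := by
        intro T hT
        have hi₀T : i₀ ∉ T := fun hmem =>
          Finset.notMem_erase i₀ S (Finset.mem_powerset.mp hT hmem)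
        have hmemiff : (∀ j, (inner ℝ (ξ j) y : ℝ) ≤ h j - if j ∈ T then s j else 0)
            ↔ (∀ j, (inner ℝ (ξ j) y : ℝ) ≤ h j - if j ∈ insert i₀ T then s j else 0) := by
          constructor
          · intro hyT j
            by_cases hj : j = i₀
            · subst hj
              rw [if_pos (Finset.mem_insert_self j T)]
              exact hi₀
            · have h5 := hyT j
              rw [show (if j ∈ insert i₀ T then s j else 0) = (if j ∈ T then s j else 0) by
                by_cases hjT : j ∈ T
                · rw [if_pos hjT, if_pos (Finset.mem_insert_of_mem hjT)]
                · rw [if_neg hjT, if_neg (by simp [hj, hjT])]]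
              exact h5
          · intro hyT j
            have h5 := hyT j
            by_cases hjT : j ∈ T
            · rw [if_pos hjT]
              rw [if_pos (Finset.mem_insert_of_mem hjT)] at h5
              exact h5
            · rw [if_neg hjT]
              by_cases hj : j = i₀
              · subst hj
                rw [if_pos (Finset.mem_insert_self j T)] at h5
                linarith [(hs j).1]
              · rw [if_neg (by simp [hj, hjT])] at h5
                exact h5
        have hcard : (insert i₀ T).card = T.card + 1 := Finset.card_insert_of_notMem hi₀T
        by_cases hyT : y ∈ PT T
        · have hyT' : y ∈ PT (insert i₀ T) := hmemiff.mp hyT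
          simp only [hf]
          rw [Set.indicator_of_mem hyT, Set.indicator_of_mem hyT', hcard, pow_succ]
          ring
        · have hyT' : y ∉ PT (insert i₀ T) := fun hc => hyT (hmemiff.mpr hc)
          simp only [hf]
          rw [Set.indicator_of_notMem hyT, Set.indicator_of_notMem hyT']
          ring
      have hsplit : ∑ T ∈ (S.erase i₀).powerset, f T y
            + ∑ T ∈ (S.erase i₀).powerset, f (insert i₀ T) y
          = ∑ T ∈ (S.erase i₀).powerset, (f T y + f (insert i₀ T) y) :=
        Finset.sum_add_distrib.symm
      rw [hsplit, Finset.sum_congr rfl hcancel, Finset.sum_const_zero]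
    · refine Finset.sum_eq_zero fun T _ => ?_
      exact Set.indicator_of_notMem (fun hmem => hy (hPTsub T hmem)) _
  have hintf : ∀ T ∈ S.powerset, Integrable (f T) volume := by
    intro T _
    exact (integrableOn_const (hfin T).ne).integrable_indicator (hmeas T)
  have hzero : ∑ T ∈ S.powerset, ∫ y, f T y ∂volume = 0 := by
    rw [← integral_finset_sum S.powerset hintf]
    simp only [hpt]
    exact integral_zero _ _
  calc ∑ T ∈ S.powerset, (-1:ℝ)^T.card * (volume (PT T)).toReal
      = ∑ T ∈ S.powerset, ∫ y, f T y ∂volume := by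
        refine Finset.sum_congr rfl fun T _ => ?_
        simp only [hf]
        rw [integral_indicator_const _ (hmeas T), smul_eq_mul,
          show volume.real (PT T) = (volume (PT T)).toReal from rfl]
        ring
    _ = 0 := hzero

lemma polyOf_translate (ξ : Fin m → EuclideanSpace ℝ (Fin n)) (h : Fin m → ℝ)
    (a : EuclideanSpace ℝ (Fin n)) (t : ℝ) :
    polyOf ξ (fun j => h j + t * (inner ℝ (ξ j) a : ℝ))
      = (fun y => y + (-(t • a))) ⁻¹' polyOf ξ h := by
  ext y
  simp only [polyOf, Set.mem_preimage, Set.mem_setOf_eq]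
  refine forall_congr' fun i => ?_
  rw [inner_add_right, inner_neg_right, real_inner_smul_right]
  constructor <;> intro hineq <;> linarith

lemma volume_polyOf_translate (ξ : Fin m → EuclideanSpace ℝ (Fin n)) (h : Fin m → ℝ)
    (a : EuclideanSpace ℝ (Fin n)) (t : ℝ) :
    MeasureTheory.volume (polyOf ξ (fun j => h j + t * (inner ℝ (ξ j) a : ℝ)))
      = MeasureTheory.volume (polyOf ξ h) := by
  rw [polyOf_translate]
  exact MeasureTheory.measure_preimage_add_right MeasureTheory.volume _ _

end Geometry

end TimorinAux

/-- Timorin.  Let `P` be a simple `n`-polytope with facets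
`P₁,...,P_m`, outward normals `ξᵢ` and volume polynomial `Vol`.  Then
(1) for every `a ∈ W` the operator `i(a) = Σᵢ ξᵢ(a)·∂ᵢ` annihilates `Vol`
(translation invariance of the volume), and
(2) if facets `P_{i₁},...,P_{i_k}` have empty intersection then
`∂_{i₁}···∂_{i_k}` annihilates `Vol`. -/
theorem annihilators_of_volume {n m : ℕ}
    (ξ : Fin m → EuclideanSpace ℝ (Fin n)) (h₀ : Fin m → ℝ)
    (hP : IsSimplePolytopeData ξ h₀)
    (Vol : MvPolynomial (Fin m) ℝ) (hhom : Vol.IsHomogeneous n)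
    (U : Set (Fin m → ℝ)) (hU : IsOpen U) (hU₀ : h₀ ∈ U)
    (hvol : ∀ h ∈ U, (MeasureTheory.volume (polyOf ξ h)).toReal =
      MvPolynomial.eval h Vol) :
    (∀ a : EuclideanSpace ℝ (Fin n),
      (∑ i, MvPolynomial.C ((inner ℝ (ξ i) a : ℝ)) * MvPolynomial.X i)
        ∈ annIdeal Vol) ∧
    (∀ S : Finset (Fin m),
      {y ∈ polyOf ξ h₀ | ∀ i ∈ S, (inner ℝ (ξ i) y : ℝ) = h₀ i} = ∅ →
        (∏ i ∈ S, MvPolynomial.X i) ∈ annIdeal Vol) := by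
  classical
  obtain ⟨hcomp, hint, -, -⟩ := hP
  constructor
  · -- Part (1): translation invariance
    intro a
    set c : Fin m → ℝ := fun i => (inner ℝ (ξ i) a : ℝ) with hc
    have hder : (∑ i, MvPolynomial.C (c i) * (MvPolynomial.pderiv i Vol)) = 0 := by
      obtain ⟨ε, hεpos, hball⟩ := Metric.isOpen_iff.mp hU h₀ hU₀
      have hδpos : 0 < ε/3 := by linarith
      apply TimorinAux.eval_eq_zero_of_cube (h₀ := h₀) hδpos
      intro h hh
      have hmem : ∀ x : Fin m → ℝ, (∀ j, |x j - h₀ j| ≤ 2*(ε/3)) → x ∈ U := by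
        intro x hx
        apply hball
        rw [Metric.mem_ball]
        have hd : dist x h₀ ≤ 2*(ε/3) := by
          rw [dist_pi_le_iff (by linarith)]
          intro j
          rw [Real.dist_eq]
          exact hx j
        linarith
      set r : ℝ := (ε/3)/(‖c‖+1) with hr
      have hnormc : (0:ℝ) ≤ ‖c‖ := norm_nonneg c
      have hrpos : 0 < r := div_pos hδpos (by linarith)
      set p := TimorinAux.lineP h c Vol with hp
      have hconst : ∀ t ∈ Set.Ioo (-r) r, p.eval t = p.eval 0 := by
        intro t ht
        have ht' : |t| < r := abs_lt.mpr ⟨ht.1, ht.2⟩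
        have hbnd : ∀ j, |t * c j| ≤ ε/3 := by
          intro j
          have h1 : |c j| ≤ ‖c‖ := by simpa using norm_le_pi_norm c j
          have h2 : |t * c j| ≤ |t| * ‖c‖ := by
            rw [abs_mul]
            exact mul_le_mul_of_nonneg_left h1 (abs_nonneg t)
          have h4 : |t| * ‖c‖ ≤ r * (‖c‖+1) := by
            apply mul_le_mul (le_of_lt ht') (by linarith) hnormc (le_of_lt hrpos)
          have h5 : r * (‖c‖+1) = ε/3 := by
            rw [hr]
            field_simp
          linarith
        have hxU : (fun j => h j + t * c j) ∈ U := by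
          apply hmem
          intro j
          calc |h j + t * c j - h₀ j| ≤ |h j - h₀ j| + |t * c j| := by
                have he : h j + t * c j - h₀ j = (h j - h₀ j) + t * c j := by ring
                rw [he]
                exact abs_add_le _ _
            _ ≤ 2*(ε/3) := by linarith [le_of_lt (hh j), hbnd j]
        have hhU : h ∈ U := by
          apply hmem
          intro j
          linarith [le_of_lt (hh j)]
        rw [hp, TimorinAux.lineP_eval, TimorinAux.lineP_eval]
        have h0 : (fun j => h j + 0 * c j) = h := funext fun j => by ring
        rw [h0, ← hvol _ hxU, ← hvol _ hhU]
        congr 1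
        simp only [hc]
        exact TimorinAux.volume_polyOf_translate ξ h a t
      have hconstp : p - Polynomial.C (p.eval 0) = 0 := by
        apply Polynomial.eq_zero_of_infinite_isRoot
        apply Set.Infinite.mono (s := Set.Ioo (-r) r)
        · intro t ht
          simp [Polynomial.IsRoot, hconst t ht]
        · exact Set.Ioo_infinite (by linarith)
      have hcoeff : p.coeff 1 = 0 := by
        have := congrArg (fun q => Polynomial.coeff q 1) hconstp
        simpa using this
      rw [hp, TimorinAux.lineP_coeff_one] at hcoeff
      rw [map_sum]
      calc ∑ i, MvPolynomial.eval h (MvPolynomial.C (c i) * MvPolynomial.pderiv i Vol)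
          = ∑ i, c i * MvPolynomial.eval h (MvPolynomial.pderiv i Vol) := by
            refine Finset.sum_congr rfl fun i _ => ?_
            rw [map_mul, MvPolynomial.eval_C]
        _ = 0 := hcoeff
    show ∀ E, contract (E * (∑ i, MvPolynomial.C (c i) * MvPolynomial.X i)) Vol = 0
    intro E
    have e1 : E * (∑ i, MvPolynomial.C (c i) * MvPolynomial.X i)
        = ∑ i, MvPolynomial.C (c i) * (E * MvPolynomial.X i) := by
      rw [Finset.mul_sum]
      exact Finset.sum_congr rfl fun i _ => by ring
    rw [e1, TimorinAux.contract_sum_left]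
    have e2 : ∀ i ∈ Finset.univ, contract (MvPolynomial.C (c i) * (E * MvPolynomial.X i)) Vol
        = contract E (MvPolynomial.C (c i) * MvPolynomial.pderiv i Vol) := by
      intro i _
      rw [TimorinAux.contract_C_mul_left, TimorinAux.contract_mul_X,
        TimorinAux.contract_C_mul_right]
    rw [Finset.sum_congr rfl e2, ← TimorinAux.contract_sum_right, hder,
      TimorinAux.contract_zero_right]
  · -- Part (2): empty intersections of facets
    intro S hface
    rcases S.eq_empty_or_nonempty with rfl | hSne
    · exfalso
      obtain ⟨x₀, hx₀⟩ := hint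
      have hx : x₀ ∈ {y ∈ polyOf ξ h₀ | ∀ i ∈ (∅ : Finset (Fin m)), (inner ℝ (ξ i) y : ℝ) = h₀ i} :=
        ⟨interior_subset hx₀, fun i hi => absurd hi (Finset.notMem_empty i)⟩
      rw [hface] at hx
      exact hx
    · obtain ⟨i₁, hi₁⟩ := hSne
      have hm' : Nonempty (Fin m) := ⟨i₁⟩
      obtain ⟨N, hslab⟩ := TimorinAux.exists_empty_slab ξ h₀ S hcomp hint hm' hface
      obtain ⟨ε, hεpos, hball⟩ := Metric.isOpen_iff.mp hU h₀ hU₀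
      set δ : ℝ := min (ε/3) (1/(2*((N:ℝ)+1))) with hδdef
      have hδpos : 0 < δ := lt_min (by linarith) (by positivity)
      have hδ1 : δ ≤ 1/(2*((N:ℝ)+1)) := min_le_right _ _
      have hδε : δ ≤ ε/3 := min_le_left _ _
      have hpd : TimorinAux.pdS S Vol = 0 := by
        apply TimorinAux.diff_vanish S Vol h₀ δ hδpos
        intro h hh s hs
        have hmemU : ∀ T : Finset (Fin m), (fun j => h j - if j ∈ T then s j else 0) ∈ U := by
          intro T
          apply hball
          rw [Metric.mem_ball]
          have hd : dist (fun j => h j - if j ∈ T then s j else 0) h₀ ≤ 2*δ := by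
            rw [dist_pi_le_iff (by linarith)]
            intro j
            rw [Real.dist_eq]
            have h1 := abs_lt.mp (hh j)
            have h2 := hs j
            by_cases hjT : j ∈ T
            · rw [if_pos hjT, abs_le]
              constructor <;> linarith [h1.1, h1.2, h2.1, h2.2]
            · rw [if_neg hjT, abs_le]
              constructor <;> linarith [h1.1, h1.2]
          linarith
        have hvolsum := TimorinAux.volume_diff_zero ξ h₀ S hcomp hint hm' N hslab δ hδpos hδ1
          h s hh hs
        calc ∑ T ∈ S.powerset, (-1:ℝ)^T.card
              * MvPolynomial.eval (fun j => h j - if j ∈ T then s j else 0) Vol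
            = ∑ T ∈ S.powerset, (-1:ℝ)^T.card
              * (MeasureTheory.volume (polyOf ξ (fun j => h j - if j ∈ T then s j else 0))).toReal := by
              refine Finset.sum_congr rfl fun T _ => ?_
              rw [hvol _ (hmemU T)]
          _ = 0 := hvolsum
      show ∀ E, contract (E * ∏ i ∈ S, MvPolynomial.X i) Vol = 0
      intro E
      rw [TimorinAux.contract_prod_X, hpd, TimorinAux.contract_zero_right]
end
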